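/- In the channel model with Markov encoders φ_1,…,φ_n, define the policy-evaluation functions J_t on belief states by: J_{n+1}(σ, u, w) := Σ_{(π,η)} σ(π,η) · (1 − max_{w̃} π(w̃)), and for t = n down to 1, J_t(σ, u, w) := Σ_{y,z} Q^f(y | φ_t(w,u)) · Q^b(z | y) · J_{t+1}(G¹(σ, φ_t, z, u, w), G²(u, φ_t, z, w), w). Then for every 1 ≤ t ≤ n+1, every w ∈ 𝒲 and every z_{1:t-1} ∈ 𝒵^{t-1} with P(W = w, Z_{1:t-1} = z_{1:t-1}) > 0, with u_t ∈ 𝒰 the memory determined by (w, z_{1:t-1}) via G² and σ_t the conditional law of (Π_{t-1}, H_{t-1}) given (W = w, Z_{1:t-1} = z_{1:t-1}), one has E[1 − max_{w̃} Π_n(w̃) | W = w, Z_{1:t-1} = z_{1:t-1}] = J_t(σ_t, u_t, w). In particular the error probability of φ with MAP decoding equals (1/|𝒲|) Σ_w J_1(σ₀, u₁, w), where σ₀ is the point mass at (uniform on 𝒲, w ↦ point mass at u₁). -/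

import Mathlib

open scoped ENNReal Classical
open Finset

namespace NoisyFeedback

variable {W X Y Z U : Type*}

/-- Memory evolution: `mem G2 u1 φ w t zs` is the sender's memory after having
observed the feedback symbols `zs = z_{1:t}`. -/
def mem (G2 : U → (W × U → X) → Z → W → U) (u1 : U) (φ : ℕ → W × U → X) (w : W) :
    (t : ℕ) → (Fin t → Z) → U
  | 0, _ => u1
  | t + 1, zs => G2 (mem G2 u1 φ w t (Fin.init zs)) (φ t) (zs (Fin.last t)) w

variable [Fintype W] [Fintype X] [Fintype Y] [Fintype Z] [Fintype U]

/-- Joint pmf `P(W = w, Y_{1:t} = ys, Z_{1:t} = zs)` of the channel model with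
Markov encoders `φ`. -/
noncomputable def jointP (Qf : X → PMF Y) (Qb : Y → PMF Z)
    (G2 : U → (W × U → X) → Z → W → U) (u1 : U) (φ : ℕ → W × U → X)
    (t : ℕ) (w : W) (ys : Fin t → Y) (zs : Fin t → Z) : ℝ≥0∞ :=
  (Fintype.card W : ℝ≥0∞)⁻¹ *
    ∏ i : Fin t,
      Qf (φ i (w, mem G2 u1 φ w i (fun j => zs (Fin.castLE i.2.le j)))) (ys i) *
        Qb (ys i) (zs i)

/-- `P(Y_{1:t} = ys)`. -/
noncomputable def probY (Qf : X → PMF Y) (Qb : Y → PMF Z)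
    (G2 : U → (W × U → X) → Z → W → U) (u1 : U) (φ : ℕ → W × U → X)
    (t : ℕ) (ys : Fin t → Y) : ℝ≥0∞ :=
  ∑ w : W, ∑ zs : Fin t → Z, jointP Qf Qb G2 u1 φ t w ys zs

/-- `P(W = w, Y_{1:t} = ys)`. -/
noncomputable def probWY (Qf : X → PMF Y) (Qb : Y → PMF Z)
    (G2 : U → (W × U → X) → Z → W → U) (u1 : U) (φ : ℕ → W × U → X)
    (t : ℕ) (ys : Fin t → Y) (w : W) : ℝ≥0∞ :=
  ∑ zs : Fin t → Z, jointP Qf Qb G2 u1 φ t w ys zs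

/-- `P(W = w, Z_{1:t} = zs)`. -/
noncomputable def probWZ (Qf : X → PMF Y) (Qb : Y → PMF Z)
    (G2 : U → (W × U → X) → Z → W → U) (u1 : U) (φ : ℕ → W × U → X)
    (t : ℕ) (w : W) (zs : Fin t → Z) : ℝ≥0∞ :=
  ∑ ys : Fin t → Y, jointP Qf Qb G2 u1 φ t w ys zs

/-- `P(W = w, U_{t+1} = u, Y_{1:t} = ys)` (memory after `t` feedback symbols). -/
noncomputable def probWUY (Qf : X → PMF Y) (Qb : Y → PMF Z)
    (G2 : U → (W × U → X) → Z → W → U) (u1 : U) (φ : ℕ → W × U → X)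
    (t : ℕ) (ys : Fin t → Y) (w : W) (u : U) : ℝ≥0∞ :=
  ∑ zs : Fin t → Z,
    if mem G2 u1 φ w t zs = u then jointP Qf Qb G2 u1 φ t w ys zs else 0


/-- Belief states of the receiver: a belief `π` on the message together with, for each
message `w`, a belief `η w` on the sender's memory. -/
@[reducible] def Belief (W U : Type*) : Type _ := (W → ℝ≥0∞) × (W → U → ℝ≥0∞)

/-- Update map `F¹` of the receiver's belief on the message. -/
noncomputable def F1 (Qf : X → PMF Y) (p : Belief W U) (φ : W × U → X) (y : Y) :
    W → ℝ≥0∞ := fun w =>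
  p.1 w * (∑ u : U, p.2 w u * Qf (φ (w, u)) y) /
    ∑ w' : W, p.1 w' * ∑ u : U, p.2 w' u * Qf (φ (w', u)) y

/-- Update map `F²` of the receiver's conditional belief on the sender's memory. -/
noncomputable def F2 (Qf : X → PMF Y) (Qb : Y → PMF Z)
    (G2 : U → (W × U → X) → Z → W → U) (p : Belief W U) (φ : W × U → X) (y : Y) :
    W → U → ℝ≥0∞ := fun w u' =>
  (∑ u : U, ∑ z : Z,
      p.2 w u * Qf (φ (w, u)) y * Qb y z * (if u' = G2 u φ z w then 1 else 0)) /
    ∑ u : U, p.2 w u * Qf (φ (w, u)) y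

/-- Combined belief update `F = (F¹, F²)`. -/
noncomputable def Fb (Qf : X → PMF Y) (Qb : Y → PMF Z)
    (G2 : U → (W × U → X) → Z → W → U) (p : Belief W U) (φ : W × U → X) (y : Y) :
    Belief W U :=
  (F1 Qf p φ y, F2 Qf Qb G2 p φ y)

/-- Sender belief update `G¹`: update of the sender's belief `σ` over receiver belief
states upon transmitting with encoding function `φ` (with memory `u`, message `w`)
and receiving feedback `z`. -/
noncomputable def G1 (Qf : X → PMF Y) (Qb : Y → PMF Z)
    (G2 : U → (W × U → X) → Z → W → U) (σ : Belief W U → ℝ≥0∞)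
    (φ : W × U → X) (z : Z) (u : U) (w : W) : Belief W U → ℝ≥0∞ := fun b =>
  (∑' p : Belief W U, σ p * ∑ y : Y,
      Qf (φ (w, u)) y * Qb y z * (if b = Fb Qf Qb G2 p φ y then 1 else 0)) /
    ∑ y : Y, Qf (φ (w, u)) y * Qb y z

/-- Initial belief state: uniform on the messages, point mass at `u1` on the memory. -/
noncomputable def b0 [Fintype W] (u1 : U) : Belief W U :=
  (fun _ => (Fintype.card W : ℝ≥0∞)⁻¹, fun _ u => if u = u1 then 1 else 0)

/-- Initial sender belief: point mass at the initial belief state `b0`. -/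
noncomputable def σ0 [Fintype W] (u1 : U) : Belief W U → ℝ≥0∞ := fun b =>
  if b = b0 u1 then 1 else 0

/-- The receiver belief process `(Π_t, H_t)` as a function of the channel outputs,
under the Markov encoders `φ`. -/
noncomputable def beliefs (Qf : X → PMF Y) (Qb : Y → PMF Z)
    (G2 : U → (W × U → X) → Z → W → U) (u1 : U) (φ : ℕ → W × U → X) :
    (t : ℕ) → (Fin t → Y) → Belief W U
  | 0, _ => b0 u1
  | t + 1, ys =>
      Fb Qf Qb G2 (beliefs Qf Qb G2 u1 φ t (Fin.init ys)) (φ t) (ys (Fin.last t))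

/-- Policy-evaluation functions, indexed by the number `k` of remaining transmissions:
`Jk φ n k = J_{n+1-k}` of Statement 7, so that `Jk φ n 0 = J_{n+1}` is the terminal
expected error `Σ_{(π,η)} σ(π,η) (1 - max_w̃ π(w̃))` and `Jk φ n (n+1-t) = J_t`. -/
noncomputable def Jk (Qf : X → PMF Y) (Qb : Y → PMF Z)
    (G2 : U → (W × U → X) → Z → W → U) (φ : ℕ → W × U → X) (n : ℕ) :
    ℕ → (Belief W U → ℝ≥0∞) → U → W → ℝ≥0∞
  | 0, σ, _, _ => ∑' p : Belief W U, σ p * (1 - univ.sup fun w' : W => p.1 w')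
  | k + 1, σ, u, w =>
      ∑ y : Y, ∑ z : Z,
        Qf (φ (n - (k + 1)) (w, u)) y * Qb y z *
          Jk Qf Qb G2 φ n k
            (G1 Qf Qb G2 σ (φ (n - (k + 1))) z u w)
            (G2 u (φ (n - (k + 1))) z w) w

end NoisyFeedback

/-!
`Jk k σ u w` is homogeneous in the sender belief `σ` (`Jk_const_mul`), so the conditioning
denominators cancel and it suffices to treat the unnormalised law `probWZBelief s w zs` of the
receiver belief `(Π_s, H_s)` on the event `{W = w, Z_{1:s} = zs}`. Stripped of its
normalisation, `G¹` maps this law at time `s` to the law at time `s + 1` on `{Z_{s+1} = z}`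
(`G1num_probWZBelief`), and summing over `z` reassembles the event; backward induction on `s`
therefore identifies `Jk (n - s)` of the law with the expected terminal error on the event.
The MAP formula is the case `s = 0` combined with Bayes' rule
`Π_n(w) P(Y_{1:n}) = P(W = w, Y_{1:n})` (`beliefs_mul_probY`), which turns the error
probability of a MAP decoder into `E[1 - max_w Π_n(w)]`.
-/

theorem PMF.sum_coe_eq_one {α : Type*} [Fintype α] (p : PMF α) : ∑ a, p a = 1 := by
  rw [← tsum_fintype (L := SummationFilter.unconditional α)]
  exact p.tsum_coe

theorem Fintype.sum_fin_succ_pi {α M : Type*} [Fintype α] [AddCommMonoid M] {t : ℕ}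
    (f : (Fin (t + 1) → α) → M) :
    ∑ v : Fin (t + 1) → α, f v = ∑ v : Fin t → α, ∑ a : α, f (Fin.snoc v a) := by
  rw [← (Fin.snocEquiv fun _ => α).sum_comp, Fintype.sum_prod_type, Finset.sum_comm]
  rfl

theorem ENNReal.tsum_sum_ite_mul {α β : Type*} [Fintype α] [DecidableEq β] (f : α → β)
    (F : α → ℝ≥0∞) (g : β → ℝ≥0∞) :
    ∑' b, (∑ a, if f a = b then F a else 0) * g b = ∑ a, F a * g (f a) := by
  simp_rw [Finset.sum_mul, ite_mul, zero_mul]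
  rw [Summable.tsum_finsetSum fun _ _ => ENNReal.summable]
  refine Finset.sum_congr rfl fun a _ => ?_
  rw [tsum_eq_single (f a) fun b hb => if_neg (Ne.symm hb), if_pos rfl]

theorem ENNReal.mul_mul_div_of_le {a b c : ℝ≥0∞} (hba : b ≤ a) (hca : c * a ≠ ⊤) :
    c * a * (b / a) = c * b := by
  rcases eq_or_ne a 0 with rfl | ha0
  · simp [nonpos_iff_eq_zero.mp hba]
  rcases eq_or_ne c 0 with rfl | hc0
  · simp
  have ha : a ≠ ⊤ := fun h => hca (by simp [h, hc0])
  rw [mul_assoc, ENNReal.mul_div_cancel ha0 ha]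

theorem ENNReal.sum_sum_ite_mul {α β : Type*} [Fintype α] [Fintype β] [DecidableEq β]
    (f : α → β) (F : α → ℝ≥0∞) (g : β → ℝ≥0∞) :
    ∑ b, (∑ a, if f a = b then F a else 0) * g b = ∑ a, F a * g (f a) :=
  (tsum_fintype _).symm.trans (ENNReal.tsum_sum_ite_mul f F g)

theorem PMF.sum_mul_sum_coe_eq_one {α β : Type*} [Fintype α] [Fintype β] (p : PMF α)
    (q : α → PMF β) : ∑ a, ∑ b, p a * q a b = 1 := by
  simp only [← Finset.mul_sum, PMF.sum_coe_eq_one, mul_one]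

theorem Fin.sum_ite_take_eq_sum_snoc {α M : Type*} [Fintype α] [AddCommMonoid M] {s n : ℕ}
    (hs : s < n) (zs : Fin s → α) (F : (Fin n → α) → M) :
    ∑ v, (if Fin.take s hs.le v = zs then F v else 0) =
      ∑ a, ∑ v, if Fin.take (s + 1) hs v = Fin.snoc zs a then F v else 0 := by
  rw [Finset.sum_comm]
  refine Finset.sum_congr rfl fun v _ => ?_
  simp only [Fin.take_succ_eq_snoc, Fin.snoc_inj, ite_and, Finset.sum_ite_irrel, Finset.sum_ite_eq,
    Finset.mem_univ, if_true, Finset.sum_const_zero]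

namespace NoisyFeedback

variable {W X Y Z U : Type*}

section Model

variable {Qf : X → PMF Y} {Qb : Y → PMF Z} {G2 : U → (W × U → X) → Z → W → U} {u1 : U}
  {φ : ℕ → W × U → X}

@[simp]
theorem mem_snoc (w : W) (t : ℕ) (zs : Fin t → Z) (z : Z) :
    mem G2 u1 φ w (t + 1) (Fin.snoc zs z) = G2 (mem G2 u1 φ w t zs) (φ t) z w := by
  simp [mem]

theorem F2_num_le [Fintype Z] [Fintype U] (p : Belief W U) (φ' : W × U → X) (y : Y) (w : W)
    (u' : U) :
    ∑ u, ∑ z, p.2 w u * Qf (φ' (w, u)) y * Qb y z * (if u' = G2 u φ' z w then 1 else 0) ≤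
      ∑ u, p.2 w u * Qf (φ' (w, u)) y := by
  refine Finset.sum_le_sum fun u _ => ?_
  calc ∑ z, p.2 w u * Qf (φ' (w, u)) y * Qb y z * (if u' = G2 u φ' z w then 1 else 0)
      ≤ ∑ z, p.2 w u * Qf (φ' (w, u)) y * Qb y z :=
        Finset.sum_le_sum fun z _ => mul_le_of_le_one_right zero_le (by split_ifs <;> simp)
    _ = p.2 w u * Qf (φ' (w, u)) y := by rw [← Finset.mul_sum, PMF.sum_coe_eq_one, mul_one]

variable [Fintype W]

theorem jointP_snoc (t : ℕ) (w : W) (ys : Fin t → Y) (y : Y) (zs : Fin t → Z) (z : Z) :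
    jointP Qf Qb G2 u1 φ (t + 1) w (Fin.snoc ys y) (Fin.snoc zs z) =
      jointP Qf Qb G2 u1 φ t w ys zs * (Qf (φ t (w, mem G2 u1 φ w t zs)) y * Qb y z) := by
  have take_snoc : ∀ (i : ℕ) (hi : i ≤ t) (hi' : i ≤ t + 1),
      (fun j : Fin i => (Fin.snoc zs z : Fin (t + 1) → Z) (Fin.castLE hi' j)) =
        fun j => zs (Fin.castLE hi j) :=
    fun i hi hi' => funext fun j => by
      rw [show Fin.castLE hi' j = (Fin.castLE hi j).castSucc from rfl, Fin.snoc_castSucc]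
  simp only [jointP, Fin.prod_univ_castSucc, Fin.snoc_castSucc, Fin.snoc_last, Fin.val_castSucc,
    Fin.val_last, mul_assoc]
  rw [take_snoc t le_rfl]
  simp only [take_snoc _ (Fin.is_lt _).le]
  rfl

theorem jointP_ne_top (t : ℕ) (w : W) (ys : Fin t → Y) (zs : Fin t → Z) :
    jointP Qf Qb G2 u1 φ t w ys zs ≠ ⊤ := by
  have : Nonempty W := ⟨w⟩
  refine ENNReal.mul_ne_top (by simp [Fintype.card_ne_zero]) (ENNReal.prod_ne_top fun i _ => ?_)
  exact ENNReal.mul_ne_top (PMF.apply_ne_top _ _) (PMF.apply_ne_top _ _)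

@[simp]
theorem beliefs_snoc [Fintype Z] [Fintype U] (t : ℕ) (ys : Fin t → Y) (y : Y) :
    beliefs Qf Qb G2 u1 φ (t + 1) (Fin.snoc ys y) =
      Fb Qf Qb G2 (beliefs Qf Qb G2 u1 φ t ys) (φ t) y := by
  simp [beliefs]

theorem probWY_ne_top [Fintype Z] (t : ℕ) (ys : Fin t → Y) (w : W) :
    probWY Qf Qb G2 u1 φ t ys w ≠ ⊤ :=
  ENNReal.sum_ne_top.mpr fun zs _ => jointP_ne_top t w ys zs

theorem probY_ne_top [Fintype Z] (t : ℕ) (ys : Fin t → Y) : probY Qf Qb G2 u1 φ t ys ≠ ⊤ :=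
  ENNReal.sum_ne_top.mpr fun w _ => probWY_ne_top t ys w

variable [Fintype Y] [Fintype Z]

theorem sum_jointP_mul_init (w : W) {m : ℕ} (F : (Fin m → Y) → (Fin m → Z) → ℝ≥0∞) :
    ∑ ys : Fin (m + 1) → Y, ∑ zs : Fin (m + 1) → Z,
        jointP Qf Qb G2 u1 φ (m + 1) w ys zs * F (Fin.init ys) (Fin.init zs) =
      ∑ ys, ∑ zs, jointP Qf Qb G2 u1 φ m w ys zs * F ys zs := by
  simp only [Fintype.sum_fin_succ_pi, jointP_snoc, Fin.init_snoc]
  refine Finset.sum_congr rfl fun ys _ => ?_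
  rw [Finset.sum_comm]
  refine Finset.sum_congr rfl fun zs _ => ?_
  calc ∑ y, ∑ z, jointP Qf Qb G2 u1 φ m w ys zs *
          (Qf (φ m (w, mem G2 u1 φ w m zs)) y * Qb y z) * F ys zs
      = jointP Qf Qb G2 u1 φ m w ys zs * F ys zs *
          ∑ y, ∑ z, Qf (φ m (w, mem G2 u1 φ w m zs)) y * Qb y z := by
        simp only [Finset.mul_sum]
        exact Finset.sum_congr rfl fun _ _ => Finset.sum_congr rfl fun _ _ => by ring
    _ = _ := by rw [PMF.sum_mul_sum_coe_eq_one, mul_one]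

theorem sum_jointP_mul_take (w : W) {s n : ℕ} (hs : s ≤ n)
    (G : (Fin s → Y) → (Fin s → Z) → ℝ≥0∞) :
    ∑ ys : Fin n → Y, ∑ zs : Fin n → Z,
        jointP Qf Qb G2 u1 φ n w ys zs * G (Fin.take s hs ys) (Fin.take s hs zs) =
      ∑ ys, ∑ zs, jointP Qf Qb G2 u1 φ s w ys zs * G ys zs := by
  induction n, hs using Nat.le_induction with
  | base => simp only [Fin.take_eq_self]
  | succ m hsm ih =>
    rw [← ih]
    exact sum_jointP_mul_init w fun ys zs => G (Fin.take s hsm ys) (Fin.take s hsm zs)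

end Model

section Bayes

variable [Fintype W] [Fintype Z] [Fintype U]
  {Qf : X → PMF Y} {Qb : Y → PMF Z} {G2 : U → (W × U → X) → Z → W → U} {u1 : U}
  {φ : ℕ → W × U → X}

theorem sum_jointP_snoc_mul (t : ℕ) (w : W) (ys : Fin t → Y) (y : Y) (g : U → Z → ℝ≥0∞) :
    ∑ zs : Fin (t + 1) → Z, jointP Qf Qb G2 u1 φ (t + 1) w (Fin.snoc ys y) zs *
        g (mem G2 u1 φ w t (Fin.init zs)) (zs (Fin.last t)) =
      ∑ u, probWUY Qf Qb G2 u1 φ t ys w u * ∑ z, Qf (φ t (w, u)) y * Qb y z * g u z := by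
  simp only [probWUY]
  rw [ENNReal.sum_sum_ite_mul]
  simp only [Fintype.sum_fin_succ_pi, jointP_snoc, Fin.init_snoc, Fin.snoc_last, Finset.mul_sum]
  exact Finset.sum_congr rfl fun _ _ => Finset.sum_congr rfl fun _ _ => by ring

theorem probWY_snoc (t : ℕ) (ys : Fin t → Y) (y : Y) (w : W) :
    probWY Qf Qb G2 u1 φ (t + 1) (Fin.snoc ys y) w =
      ∑ u, probWUY Qf Qb G2 u1 φ t ys w u * Qf (φ t (w, u)) y := by
  have h := sum_jointP_snoc_mul (Qf := Qf) (Qb := Qb) (G2 := G2) (u1 := u1) (φ := φ) t w ys y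
    fun _ _ => 1
  simpa only [probWY, mul_one, ← Finset.mul_sum, PMF.sum_coe_eq_one] using h

theorem probWUY_snoc (t : ℕ) (ys : Fin t → Y) (y : Y) (w : W) (u' : U) :
    probWUY Qf Qb G2 u1 φ (t + 1) (Fin.snoc ys y) w u' =
      ∑ u, probWUY Qf Qb G2 u1 φ t ys w u *
        ∑ z, Qf (φ t (w, u)) y * Qb y z * (if u' = G2 u (φ t) z w then 1 else 0) := by
  rw [← sum_jointP_snoc_mul, probWUY]
  refine Finset.sum_congr rfl fun zs _ => ?_
  simp only [mul_ite, mul_one, mul_zero, mem, eq_comm (b := u')]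

theorem beliefs_mul_probY (t : ℕ) (ys : Fin t → Y) (w : W) :
    (beliefs Qf Qb G2 u1 φ t ys).1 w * probY Qf Qb G2 u1 φ t ys = probWY Qf Qb G2 u1 φ t ys w ∧
      ∀ u, (beliefs Qf Qb G2 u1 φ t ys).1 w * (beliefs Qf Qb G2 u1 φ t ys).2 w u *
          probY Qf Qb G2 u1 φ t ys = probWUY Qf Qb G2 u1 φ t ys w u := by
  induction t generalizing w with
  | zero =>
    have : Nonempty W := ⟨w⟩
    have hcard : (Fintype.card W : ℝ≥0∞) * (Fintype.card W : ℝ≥0∞)⁻¹ = 1 :=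
      ENNReal.mul_inv_cancel (by simp [Fintype.card_ne_zero]) (ENNReal.natCast_ne_top _)
    simp [beliefs, b0, probY, probWY, probWUY, jointP, mem, hcard, eq_comm (a := u1)]
  | succ t ih =>
    obtain ⟨ys, y, rfl⟩ : ∃ ys' y, ys = Fin.snoc ys' y :=
      ⟨Fin.init ys, ys (Fin.last t), (Fin.snoc_init_self ys).symm⟩
    replace ih := ih ys
    rw [beliefs_snoc]
    set π := (beliefs Qf Qb G2 u1 φ t ys).1
    set η := (beliefs Qf Qb G2 u1 φ t ys).2
    set P := probY Qf Qb G2 u1 φ t ys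
    set S : W → ℝ≥0∞ := fun w' => ∑ u, η w' u * Qf (φ t (w', u)) y
    set D := ∑ w', π w' * S w'
    set N : U → ℝ≥0∞ := fun u' => ∑ u, ∑ z,
      η w u * Qf (φ t (w, u)) y * Qb y z * (if u' = G2 u (φ t) z w then 1 else 0)
    have hWY : ∀ w', π w' * S w' * P = probWY Qf Qb G2 u1 φ (t + 1) (Fin.snoc ys y) w' := by
      intro w'
      simp only [S, probWY_snoc, Finset.mul_sum, Finset.sum_mul, ← (ih w').2]
      exact Finset.sum_congr rfl fun _ _ => by ring
    have hWUY : ∀ u', π w * N u' * P = probWUY Qf Qb G2 u1 φ (t + 1) (Fin.snoc ys y) w u' := by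
      intro u'
      simp only [N, probWUY_snoc, Finset.mul_sum, Finset.sum_mul, ← (ih w).2]
      exact Finset.sum_congr rfl fun _ _ => Finset.sum_congr rfl fun _ _ => by ring
    have hY : D * P = probY Qf Qb G2 u1 φ (t + 1) (Fin.snoc ys y) := by
      rw [Finset.sum_mul]
      exact Finset.sum_congr rfl fun w' _ => hWY w'
    have hNS : ∀ u', N u' ≤ S w := fun u' => F2_num_le (beliefs Qf Qb G2 u1 φ t ys) (φ t) y w u'
    have hπ : (Fb Qf Qb G2 (beliefs Qf Qb G2 u1 φ t ys) (φ t) y).1 w *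
        probY Qf Qb G2 u1 φ (t + 1) (Fin.snoc ys y) = π w * S w * P := by
      rw [← hY, mul_comm, mul_comm D]
      exact (ENNReal.mul_mul_div_of_le (Finset.single_le_sum (fun _ _ => zero_le)
        (Finset.mem_univ w)) (by rw [mul_comm, hY]; exact probY_ne_top _ _)).trans (mul_comm _ _)
    refine ⟨hπ.trans (hWY w), fun u' => ?_⟩
    calc _ = π w * S w * P * (N u' / S w) := by rw [mul_right_comm, hπ]; rfl
      _ = π w * P * N u' := by
        rw [mul_right_comm (π w), ENNReal.mul_mul_div_of_le (hNS u')
          (by rw [mul_right_comm, hWY]; exact probWY_ne_top _ _ _)]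
      _ = _ := by rw [← hWUY]; ring

theorem sum_ite_ne_probWY_eq (t : ℕ) (ys : Fin t → Y) (wmap : W)
    (hmap : ∀ w, probWY Qf Qb G2 u1 φ t ys w ≤ probWY Qf Qb G2 u1 φ t ys wmap) :
    ∑ w, (if wmap ≠ w then probWY Qf Qb G2 u1 φ t ys w else 0) =
      probY Qf Qb G2 u1 φ t ys * (1 - univ.sup fun w => (beliefs Qf Qb G2 u1 φ t ys).1 w) := by
  have hsup : probY Qf Qb G2 u1 φ t ys * (univ.sup fun w => (beliefs Qf Qb G2 u1 φ t ys).1 w) =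
      probWY Qf Qb G2 u1 φ t ys wmap := by
    rw [Finset.apply_sup_eq_sup_comp_of_linearOrder _ mul_right_mono (mul_zero _)]
    simp only [Function.comp_def, mul_comm (probY _ _ _ _ _ _ _), (beliefs_mul_probY _ _ _).1]
    exact le_antisymm (Finset.sup_le fun w _ => hmap w) (Finset.le_sup (Finset.mem_univ wmap))
  rw [ENNReal.mul_sub fun _ _ => probY_ne_top t ys, mul_one, hsup]
  refine (ENNReal.sub_eq_of_eq_add (probWY_ne_top t ys wmap) ?_).symm
  rw [← Finset.sum_filter, Finset.filter_ne, Finset.sum_erase_add _ _ (Finset.mem_univ _)]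
  rfl

end Bayes

/-- `P(W = w, Z_{1:t} = zs, (Π_t, H_t) = b)`. -/
noncomputable def probWZBelief [Fintype W] [Fintype Y] [Fintype Z] [Fintype U]
    (Qf : X → PMF Y) (Qb : Y → PMF Z) (G2 : U → (W × U → X) → Z → W → U) (u1 : U)
    (φ : ℕ → W × U → X) (t : ℕ) (w : W) (zs : Fin t → Z) : Belief W U → ℝ≥0∞ := fun b =>
  ∑ ys : Fin t → Y, if beliefs Qf Qb G2 u1 φ t ys = b then jointP Qf Qb G2 u1 φ t w ys zs else 0

/-- `G1` before division by `P(Z = z | W = w, U = u)`. -/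
noncomputable def G1num [Fintype W] [Fintype Y] [Fintype Z] [Fintype U]
    (Qf : X → PMF Y) (Qb : Y → PMF Z) (G2 : U → (W × U → X) → Z → W → U)
    (σ : Belief W U → ℝ≥0∞) (φ : W × U → X) (z : Z) (u : U) (w : W) : Belief W U → ℝ≥0∞ :=
  fun b => ∑' p : Belief W U, σ p * ∑ y : Y,
    Qf (φ (w, u)) y * Qb y z * (if b = Fb Qf Qb G2 p φ y then 1 else 0)

section PolicyEvaluation

variable [Fintype W] [Fintype Y] [Fintype Z] [Fintype U]
  {Qf : X → PMF Y} {Qb : Y → PMF Z} {G2 : U → (W × U → X) → Z → W → U} {u1 : U}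
  {φ : ℕ → W × U → X} {n : ℕ}

theorem G1_const_mul (σ : Belief W U → ℝ≥0∞) (c : ℝ≥0∞) (φ : W × U → X) (z : Z) (u : U) (w : W) :
    G1 Qf Qb G2 (fun b => c * σ b) φ z u w = fun b => c * G1 Qf Qb G2 σ φ z u w b := by
  funext b
  simp only [G1, mul_assoc, ENNReal.tsum_mul_left, mul_div_assoc]

theorem Jk_const_mul (k : ℕ) (σ : Belief W U → ℝ≥0∞) (c : ℝ≥0∞) (u : U) (w : W) :
    Jk Qf Qb G2 φ n k (fun b => c * σ b) u w = c * Jk Qf Qb G2 φ n k σ u w := by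
  induction k generalizing σ u with
  | zero => simp only [Jk, mul_assoc, ENNReal.tsum_mul_left]
  | succ k ih =>
    simp only [Jk, G1_const_mul, ih, Finset.mul_sum]
    exact Finset.sum_congr rfl fun _ _ => Finset.sum_congr rfl fun _ _ => mul_left_comm _ _ _

theorem mul_Jk_G1 (k : ℕ) (σ : Belief W U → ℝ≥0∞) (φ' : W × U → X) (z : Z) (u u' : U) (w w' : W) :
    (∑ y, Qf (φ' (w, u)) y * Qb y z) * Jk Qf Qb G2 φ n k (G1 Qf Qb G2 σ φ' z u w) u' w' =
      Jk Qf Qb G2 φ n k (G1num Qf Qb G2 σ φ' z u w) u' w' := by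
  set c := ∑ y, Qf (φ' (w, u)) y * Qb y z
  have hG1 : G1 Qf Qb G2 σ φ' z u w = fun b => c⁻¹ * G1num Qf Qb G2 σ φ' z u w b :=
    funext fun b => ENNReal.div_eq_inv_mul
  rw [hG1, Jk_const_mul, ← mul_assoc]
  rcases eq_or_ne c 0 with hc | hc
  · have hterm : ∀ y, Qf (φ' (w, u)) y * Qb y z = 0 := fun y =>
      (Finset.sum_eq_zero_iff.mp hc) y (Finset.mem_univ y)
    have hnum : G1num Qf Qb G2 σ φ' z u w = fun b => 0 * σ b := by
      funext b
      simp [G1num, hterm]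
    rw [hnum, Jk_const_mul, hc]
    simp
  · have hc_top : c ≠ ⊤ := ENNReal.sum_ne_top.mpr fun y _ =>
      ENNReal.mul_ne_top (PMF.apply_ne_top _ _) (PMF.apply_ne_top _ _)
    rw [ENNReal.mul_inv_cancel hc hc_top, one_mul]

theorem Jk_succ_eq_sum_G1num (k : ℕ) (σ : Belief W U → ℝ≥0∞) (u : U) (w : W) :
    Jk Qf Qb G2 φ n (k + 1) σ u w =
      ∑ z, Jk Qf Qb G2 φ n k (G1num Qf Qb G2 σ (φ (n - (k + 1))) z u w)
        (G2 u (φ (n - (k + 1))) z w) w := by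
  rw [Jk, Finset.sum_comm]
  refine Finset.sum_congr rfl fun z _ => ?_
  rw [← Finset.sum_mul, mul_Jk_G1]

theorem G1num_probWZBelief (t : ℕ) (w : W) (zs : Fin t → Z) (z : Z) :
    G1num Qf Qb G2 (probWZBelief Qf Qb G2 u1 φ t w zs) (φ t) z (mem G2 u1 φ w t zs) w =
      probWZBelief Qf Qb G2 u1 φ (t + 1) w (Fin.snoc zs z) := by
  funext b
  simp only [G1num, probWZBelief]
  rw [ENNReal.tsum_sum_ite_mul]
  simp only [Fintype.sum_fin_succ_pi, beliefs_snoc, jointP_snoc, Finset.mul_sum, eq_comm (a := b),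
    mul_ite, mul_one, mul_zero]

theorem Jk_zero_probWZBelief (w : W) (zs : Fin n → Z) (u : U) (w' : W) :
    Jk Qf Qb G2 φ n 0 (probWZBelief Qf Qb G2 u1 φ n w zs) u w' =
      ∑ ys, jointP Qf Qb G2 u1 φ n w ys zs *
        (1 - univ.sup fun w'' : W => (beliefs Qf Qb G2 u1 φ n ys).1 w'') := by
  simp only [Jk, probWZBelief]
  rw [ENNReal.tsum_sum_ite_mul]

theorem sum_take_error_eq_Jk (w : W) {s : ℕ} (hs : s ≤ n) (zs : Fin s → Z) :
    (∑ ys : Fin n → Y, ∑ zf : Fin n → Z,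
        if Fin.take s hs zf = zs then
          jointP Qf Qb G2 u1 φ n w ys zf *
            (1 - univ.sup fun w' : W => (beliefs Qf Qb G2 u1 φ n ys).1 w')
        else 0) =
      Jk Qf Qb G2 φ n (n - s) (probWZBelief Qf Qb G2 u1 φ s w zs) (mem G2 u1 φ w s zs) w := by
  induction hs using Nat.decreasingInduction with
  | self =>
    simp only [Fin.take_eq_self, Finset.sum_ite_eq', Finset.mem_univ, if_true, Nat.sub_self,
      Jk_zero_probWZBelief]
  | of_succ s hs ih =>
    have hk : n - s = n - (s + 1) + 1 := by omega
    have hφ : n - (n - (s + 1) + 1) = s := by omega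
    rw [hk, Jk_succ_eq_sum_G1num, hφ]
    simp only [Fin.sum_ite_take_eq_sum_snoc hs zs, G1num_probWZBelief, ← mem_snoc, ← ih]
    exact Finset.sum_comm

theorem sum_prefix_error_eq_Jk (w : W) {s : ℕ} (hs : s ≤ n) (zs : Fin s → Z) :
    (∑ ys : Fin n → Y, ∑ zf : Fin n → Z,
        if ∀ j : Fin s, zf (Fin.castLE hs j) = zs j then
          jointP Qf Qb G2 u1 φ n w ys zf *
            (1 - univ.sup fun w' : W => (beliefs Qf Qb G2 u1 φ n ys).1 w')
        else 0) =
      Jk Qf Qb G2 φ n (n - s) (probWZBelief Qf Qb G2 u1 φ s w zs) (mem G2 u1 φ w s zs) w := by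
  simpa only [funext_iff, Fin.take_apply] using sum_take_error_eq_Jk w hs zs

theorem sum_prefix_belief_eq_probWZBelief (w : W) {s : ℕ} (hs : s ≤ n) (zs : Fin s → Z)
    (b : Belief W U) :
    (∑ ys : Fin n → Y, ∑ zf : Fin n → Z,
        if (∀ j : Fin s, zf (Fin.castLE hs j) = zs j) ∧
            beliefs Qf Qb G2 u1 φ s (fun j => ys (Fin.castLE hs j)) = b then
          jointP Qf Qb G2 u1 φ n w ys zf else 0) =
      probWZBelief Qf Qb G2 u1 φ s w zs b := by
  have h := sum_jointP_mul_take (Qf := Qf) (Qb := Qb) (G2 := G2) (u1 := u1) (φ := φ) w hs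
    fun ys zf => if zf = zs ∧ beliefs Qf Qb G2 u1 φ s ys = b then 1 else 0
  simp only [mul_ite, mul_one, mul_zero] at h
  simp only [← funext_iff]
  refine h.trans ?_
  rw [probWZBelief]
  simp only [and_comm (a := _ = zs), ite_and, Finset.sum_ite_irrel, Finset.sum_ite_eq',
    Finset.mem_univ, if_true, Finset.sum_const_zero]

theorem sum_error_eq_Jk_σ0 (w : W) :
    ∑ ys : Fin n → Y, ∑ zf : Fin n → Z, jointP Qf Qb G2 u1 φ n w ys zf *
        (1 - univ.sup fun w' : W => (beliefs Qf Qb G2 u1 φ n ys).1 w') =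
      (Fintype.card W : ℝ≥0∞)⁻¹ * Jk Qf Qb G2 φ n n (σ0 u1) u1 w := by
  have htake : ∀ zf : Fin n → Z, Fin.take 0 (Nat.zero_le n) zf = Fin.elim0 :=
    fun _ => Subsingleton.elim _ _
  have hlaw : probWZBelief Qf Qb G2 u1 φ 0 w Fin.elim0 =
      fun b => (Fintype.card W : ℝ≥0∞)⁻¹ * σ0 u1 b := by
    funext b
    simp [probWZBelief, σ0, beliefs, jointP, eq_comm]
  have h := sum_take_error_eq_Jk (Qf := Qf) (Qb := Qb) (G2 := G2) (u1 := u1) (φ := φ) w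
    (Nat.zero_le n) Fin.elim0
  simpa only [htake, if_true, Nat.sub_zero, hlaw, Jk_const_mul, mem] using h

end PolicyEvaluation

variable [Fintype W] [Fintype X] [Fintype Y] [Fintype Z] [Fintype U]

theorem policy_evaluation_general
    (Qf : X → PMF Y) (Qb : Y → PMF Z)
    (G2 : U → (W × U → X) → Z → W → U) (u1 : U) (φ : ℕ → W × U → X) (n : ℕ) :
    (∀ (s : ℕ) (hs : s ≤ n) (w : W) (zs : Fin s → Z),
      0 <
        (∑ ys : Fin n → Y, ∑ zf : Fin n → Z,
          if ∀ j : Fin s, zf (Fin.castLE hs j) = zs j then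
            jointP Qf Qb G2 u1 φ n w ys zf else 0) →
      (∑ ys : Fin n → Y, ∑ zf : Fin n → Z,
          if ∀ j : Fin s, zf (Fin.castLE hs j) = zs j then
            jointP Qf Qb G2 u1 φ n w ys zf *
              (1 - univ.sup fun w' : W => (beliefs Qf Qb G2 u1 φ n ys).1 w')
          else 0) /
        (∑ ys : Fin n → Y, ∑ zf : Fin n → Z,
          if ∀ j : Fin s, zf (Fin.castLE hs j) = zs j then
            jointP Qf Qb G2 u1 φ n w ys zf else 0) =
      Jk Qf Qb G2 φ n (n - s)
        (fun b =>
          (∑ ys : Fin n → Y, ∑ zf : Fin n → Z,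
            if (∀ j : Fin s, zf (Fin.castLE hs j) = zs j) ∧
                beliefs Qf Qb G2 u1 φ s (fun j => ys (Fin.castLE hs j)) = b then
              jointP Qf Qb G2 u1 φ n w ys zf else 0) /
          (∑ ys : Fin n → Y, ∑ zf : Fin n → Z,
            if ∀ j : Fin s, zf (Fin.castLE hs j) = zs j then
              jointP Qf Qb G2 u1 φ n w ys zf else 0))
        (mem G2 u1 φ w s zs) w) ∧
    ∀ gMAP : (Fin n → Y) → W,
      (∀ (ys : Fin n → Y) (w : W),
          probWY Qf Qb G2 u1 φ n ys w ≤ probWY Qf Qb G2 u1 φ n ys (gMAP ys)) →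
      (∑ w : W, ∑ ys : Fin n → Y, ∑ zs : Fin n → Z,
          if gMAP ys ≠ w then jointP Qf Qb G2 u1 φ n w ys zs else 0) =
        (Fintype.card W : ℝ≥0∞)⁻¹ * ∑ w : W, Jk Qf Qb G2 φ n n (σ0 u1) u1 w := by
  refine ⟨fun s hs w zs _ => ?_, fun gMAP hMAP => ?_⟩
  · simp only [sum_prefix_belief_eq_probWZBelief, ENNReal.div_eq_inv_mul, Jk_const_mul,
      sum_prefix_error_eq_Jk]
  · calc (∑ w, ∑ ys, ∑ zs, if gMAP ys ≠ w then jointP Qf Qb G2 u1 φ n w ys zs else 0)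
        = ∑ ys, ∑ w, if gMAP ys ≠ w then probWY Qf Qb G2 u1 φ n ys w else 0 := by
          rw [Finset.sum_comm]
          simp only [probWY, Finset.sum_ite_irrel, Finset.sum_const_zero]
      _ = ∑ ys, probY Qf Qb G2 u1 φ n ys *
            (1 - univ.sup fun w => (beliefs Qf Qb G2 u1 φ n ys).1 w) :=
          Finset.sum_congr rfl fun ys _ => sum_ite_ne_probWY_eq n ys (gMAP ys) (hMAP ys)
      _ = ∑ w, ∑ ys, ∑ zs, jointP Qf Qb G2 u1 φ n w ys zs *
            (1 - univ.sup fun w' => (beliefs Qf Qb G2 u1 φ n ys).1 w') := by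
          simp only [probY, Finset.sum_mul]
          exact Finset.sum_comm
      _ = _ := by simp only [sum_error_eq_Jk_σ0, Finset.mul_sum]

/-- **Policy evaluation via the sender's belief state** (Statement 7).  For each time
`t = s + 1` (so `0 ≤ s ≤ n`), each message `w` and each feedback history
`zs = z_{1:s}` of positive probability, the conditional expected terminal error
`E[1 - max_w̃ Π_n(w̃) | W = w, Z_{1:s} = zs]` equals `J_{s+1}(σ_{s+1}, u_{s+1}, w)`,
where `σ_{s+1}` is the conditional law of `(Π_s, H_s)` given `(W = w, Z_{1:s} = zs)`
and `u_{s+1}` is the memory determined by `(w, zs)`.  In particular the error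
probability of `φ` with MAP decoding equals `(1/|𝒲|) Σ_w J_1(σ₀, u₁, w)`. -/
theorem policy_evaluation [Nonempty W] [Nonempty X] [Nonempty Y] [Nonempty Z] [Nonempty U]
    (Qf : X → PMF Y) (Qb : Y → PMF Z)
    (G2 : U → (W × U → X) → Z → W → U) (u1 : U) (φ : ℕ → W × U → X) (n : ℕ) :
    (∀ (s : ℕ) (hs : s ≤ n) (w : W) (zs : Fin s → Z),
      0 <
        (∑ ys : Fin n → Y, ∑ zf : Fin n → Z,
          if ∀ j : Fin s, zf (Fin.castLE hs j) = zs j then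
            jointP Qf Qb G2 u1 φ n w ys zf else 0) →
      (∑ ys : Fin n → Y, ∑ zf : Fin n → Z,
          if ∀ j : Fin s, zf (Fin.castLE hs j) = zs j then
            jointP Qf Qb G2 u1 φ n w ys zf *
              (1 - univ.sup fun w' : W => (beliefs Qf Qb G2 u1 φ n ys).1 w')
          else 0) /
        (∑ ys : Fin n → Y, ∑ zf : Fin n → Z,
          if ∀ j : Fin s, zf (Fin.castLE hs j) = zs j then
            jointP Qf Qb G2 u1 φ n w ys zf else 0) =
      Jk Qf Qb G2 φ n (n - s)
        (fun b =>
          (∑ ys : Fin n → Y, ∑ zf : Fin n → Z,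
            if (∀ j : Fin s, zf (Fin.castLE hs j) = zs j) ∧
                beliefs Qf Qb G2 u1 φ s (fun j => ys (Fin.castLE hs j)) = b then
              jointP Qf Qb G2 u1 φ n w ys zf else 0) /
          (∑ ys : Fin n → Y, ∑ zf : Fin n → Z,
            if ∀ j : Fin s, zf (Fin.castLE hs j) = zs j then
              jointP Qf Qb G2 u1 φ n w ys zf else 0))
        (mem G2 u1 φ w s zs) w) ∧
    ∀ gMAP : (Fin n → Y) → W,
      (∀ (ys : Fin n → Y) (w : W),
          probWY Qf Qb G2 u1 φ n ys w ≤ probWY Qf Qb G2 u1 φ n ys (gMAP ys)) →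
      (∑ w : W, ∑ ys : Fin n → Y, ∑ zs : Fin n → Z,
          if gMAP ys ≠ w then jointP Qf Qb G2 u1 φ n w ys zs else 0) =
        (Fintype.card W : ℝ≥0∞)⁻¹ * ∑ w : W, Jk Qf Qb G2 φ n n (σ0 u1) u1 w :=
  policy_evaluation_general Qf Qb G2 u1 φ n

end NoisyFeedback
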